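/- Let σ, b : ℝ → ℝ be continuous with σ > 0 and b(0) = 0, and suppose that Σ exists. Then 𝒟_L, the set of f ∈ C¹(ℝ) that are C¹-generalized solutions of Lf = ℓ̇ for some ℓ̇ ∈ C⁰(ℝ), is exactly the set of f ∈ C¹(ℝ) for which there exists ψ ∈ C¹(ℝ) with f'(x) = e^{−Σ(x)} ψ(x) for all x. -/

import Mathlib

open MeasureTheory Filter Topology Set

noncomputable section

/-- A mollifier: a Schwartz function with total integral one. -/
def IsMollifier (Φ : SchwartzMap ℝ ℝ) : Prop := (∫ x : ℝ, Φ x) = 1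

/-- `Φₙ(x) = n Φ(n x)`. -/
def moll (Φ : SchwartzMap ℝ ℝ) (n : ℕ) (x : ℝ) : ℝ := (n : ℝ) * Φ ((n : ℝ) * x)

/-- Convolution `(f ∗ g)(x) = ∫ f(x − y) g(y) dy`. -/
def convol (f g : ℝ → ℝ) (x : ℝ) : ℝ := ∫ y : ℝ, f (x - y) * g y

/-- `σₙ² = (σ² ∧ n) ∗ Φₙ`. -/
def sigmaSqReg (σ : ℝ → ℝ) (Φ : SchwartzMap ℝ ℝ) (n : ℕ) : ℝ → ℝ :=
  convol (fun x => min (σ x ^ 2) (n : ℝ)) (moll Φ n)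

/-- `bₙ = ((−n) ∨ (b ∧ n)) ∗ Φₙ`. -/
def bReg (b : ℝ → ℝ) (Φ : SchwartzMap ℝ ℝ) (n : ℕ) : ℝ → ℝ :=
  convol (fun x => max (-(n : ℝ)) (min (b x) (n : ℝ))) (moll Φ n)

/-- `x ↦ 2∫₀ˣ bₙ'/σₙ² dy`. -/
def SigmaApprox (σ b : ℝ → ℝ) (Φ : SchwartzMap ℝ ℝ) (n : ℕ) (x : ℝ) : ℝ :=
  2 * ∫ y in (0:ℝ)..x, deriv (bReg b Φ n) y / sigmaSqReg σ Φ n y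

/-- `Σ` exists, with value `Sg`: for every mollifier the approximations converge
uniformly on compact sets to the (mollifier-independent) continuous function `Sg`. -/
def SigmaExists (σ b Sg : ℝ → ℝ) : Prop :=
  Continuous Sg ∧
    ∀ Φ : SchwartzMap ℝ ℝ, IsMollifier Φ →
      TendstoLocallyUniformly (fun n => SigmaApprox σ b Φ n) Sg atTop

/-- The regularized operator `Lₙ g = (σₙ²/2) g'' + bₙ' g'`. -/
def Lreg (σ b : ℝ → ℝ) (Φ : SchwartzMap ℝ ℝ) (n : ℕ) (g : ℝ → ℝ) (x : ℝ) : ℝ :=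
  sigmaSqReg σ Φ n x / 2 * deriv (deriv g) x + deriv (bReg b Φ n) x * deriv g x

/-- `f` is a `C¹`-generalized solution of `L f = ℓ`. -/
def IsC1GenSolution (σ b f ℓ : ℝ → ℝ) : Prop :=
  ContDiff ℝ 1 f ∧ Continuous ℓ ∧
    ∀ Φ : SchwartzMap ℝ ℝ, IsMollifier Φ →
      ∃ fn : ℕ → ℝ → ℝ,
        (∀ n, ContDiff ℝ 2 (fn n)) ∧
        (∀ n, Continuous (Lreg σ b Φ n (fn n))) ∧
        TendstoLocallyUniformly fn f atTop ∧
        TendstoLocallyUniformly (fun n => deriv (fn n)) (deriv f) atTop ∧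
        TendstoLocallyUniformly (fun n => Lreg σ b Φ n (fn n)) ℓ atTop

/-- `h(x) = ∫₀ˣ e^{−Σ(y)} dy`, i.e. `h(0) = 0`, `h' = e^{−Σ}`. -/
def hFun (Sg : ℝ → ℝ) (x : ℝ) : ℝ := ∫ y in (0:ℝ)..x, Real.exp (-Sg y)

/-! Write `Sₙ` for the approximations of `Σ`, so that `Sₙ' = 2 bₙ' / σₙ²` and hence
`(e^{Sₙ} g')' = 2 e^{Sₙ} Lₙ g / σₙ²` for every `g ∈ C²`. Along an approximating sequence
`fₙ → f` the functions `e^{Sₙ} fₙ'` converge to `ψ := e^{Σ} f'` while their derivatives converge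
locally uniformly to `2 e^{Σ} ℓ / σ²`, so `ψ ∈ C¹`. Conversely, given `ψ`, the functions
`fₙ x = f 0 + ∫₀ˣ e^{-Sₙ} ψ` satisfy `Lₙ fₙ = e^{-Sₙ} σₙ² ψ' / 2 → e^{-Σ} σ² ψ' / 2`.
The analytic input is that `σₙ² → σ²` locally uniformly for every Schwartz mollifier: an
approximate-identity estimate in which the truncation `σ² ∧ n` is paid for by the first moment
of `Φ`. -/

section LocallyUniform

variable {ι α β γ : Type*} [TopologicalSpace α] [UniformSpace β] [UniformSpace γ]
  {F : ι → α → β} {f : α → β} {l : Filter ι}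

theorem tendstoLocallyUniformly_const (f : α → β) (l : Filter ι) :
    TendstoLocallyUniformly (fun _ => f) f l :=
  fun _ hu _ => ⟨univ, univ_mem, .of_forall fun _ _ _ => refl_mem_uniformity hu⟩

theorem Continuous.comp_tendstoLocallyUniformly {g : β → γ} (hg : Continuous g)
    (hF : TendstoLocallyUniformly F f l) (hf : Continuous f) :
    TendstoLocallyUniformly (fun i x => g (F i x)) (fun x => g (f x)) l := by
  rw [tendstoLocallyUniformly_iff_forall_tendsto] at hF ⊢
  intro x
  have hlim : Tendsto (fun y : ι × α => f y.2) (l ×ˢ 𝓝 x) (𝓝 (f x)) :=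
    (hf.tendsto x).comp tendsto_snd
  have hFlim : Tendsto (fun y : ι × α => F y.1 y.2) (l ×ˢ 𝓝 x) (𝓝 (f x)) :=
    hlim.congr_uniformity (hF x)
  exact (((hg.tendsto _).comp hlim).prodMk_nhds ((hg.tendsto _).comp hFlim)).mono_right
    (nhds_le_uniformity _)

theorem TendstoLocallyUniformly.congr_of_eventually_eqOn [LocallyCompactSpace α] {G : ι → α → β}
    (hF : TendstoLocallyUniformly F f l)
    (hFG : ∀ K, IsCompact K → ∀ᶠ i in l, EqOn (F i) (G i) K) :
    TendstoLocallyUniformly G f l := by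
  rw [tendstoLocallyUniformly_iff_forall_isCompact] at hF ⊢
  exact fun K hK => (hF K hK).congr (hFG K hK)

end LocallyUniform

theorem IsCompact.exists_isCompact_uIcc_subset {K : Set ℝ} (hK : IsCompact K) (a : ℝ) :
    ∃ L, IsCompact L ∧ ∀ x ∈ K, uIcc a x ⊆ L := by
  obtain ⟨R, hR⟩ := (hK.insert a).isBounded.subset_closedBall a
  exact ⟨_, isCompact_closedBall a R, fun x hx =>
    (convex_closedBall a R).ordConnected.uIcc_subset (hR (mem_insert a K))
      (hR (mem_insert_of_mem a hx))⟩

theorem TendstoLocallyUniformly.intervalIntegral {ι : Type*} {l : Filter ι} {F : ι → ℝ → ℝ}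
    {f : ℝ → ℝ} (hF : TendstoLocallyUniformly F f l) (hFc : ∀ i, Continuous (F i))
    (hf : Continuous f) (a : ℝ) :
    TendstoLocallyUniformly (fun i x => ∫ t in a..x, F i t) (fun x => ∫ t in a..x, f t) l := by
  rw [tendstoLocallyUniformly_iff_forall_isCompact] at hF ⊢
  intro K hK
  obtain ⟨L, hL, hKL⟩ := hK.exists_isCompact_uIcc_subset a
  obtain ⟨D, hD⟩ := hK.isBounded.subset_closedBall a
  have hFL := Metric.tendstoUniformlyOn_iff.1 (hF L hL)
  rw [Metric.tendstoUniformlyOn_iff]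
  intro ε hε
  have hε' : 0 < ε / (|D| + 1) := by positivity
  filter_upwards [hFL _ hε'] with i hi x hx
  have hxD : |x - a| ≤ |D| := (Metric.mem_closedBall.1 (hD hx)).trans (le_abs_self D)
  rw [dist_eq_norm, ← intervalIntegral.integral_sub (hf.intervalIntegrable _ _)
    ((hFc i).intervalIntegrable _ _)]
  calc ‖∫ t in a..x, (f t - F i t)‖ ≤ ε / (|D| + 1) * |x - a| :=
        intervalIntegral.norm_integral_le_of_norm_le_const fun t ht =>
          (hi t (hKL x hx (uIoc_subset_uIcc ht))).le
    _ ≤ ε / (|D| + 1) * |D| := by gcongr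
    _ < ε := by
        rw [div_mul_eq_mul_div, div_lt_iff₀ (by positivity)]
        nlinarith

theorem SchwartzMap.exists_abs_le_mul_inv_one_add_sq (Φ : SchwartzMap ℝ ℝ) :
    ∃ C, ∀ x, |Φ x| ≤ C * (1 + x ^ 2)⁻¹ := by
  refine ⟨SchwartzMap.seminorm ℝ 0 0 Φ + SchwartzMap.seminorm ℝ 2 0 Φ, fun x => ?_⟩
  have h₀ := Φ.norm_pow_mul_le_seminorm ℝ 0 x
  have h₂ := Φ.norm_pow_mul_le_seminorm ℝ 2 x
  simp only [pow_zero, one_mul, Real.norm_eq_abs, sq_abs] at h₀ h₂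
  rw [← div_eq_mul_inv, le_div_iff₀ (by positivity)]
  nlinarith

theorem exists_isMollifier : ∃ Φ : SchwartzMap ℝ ℝ, IsMollifier Φ :=
  let φ : ContDiffBump (0 : ℝ) := ⟨1, 2, one_pos, one_lt_two⟩
  ⟨φ.hasCompactSupport_normed.toSchwartzMap φ.contDiff_normed, φ.integral_normed⟩

section Mollifier

variable (Φ : SchwartzMap ℝ ℝ) (n : ℕ)

theorem continuous_moll : Continuous (moll Φ n) := by
  unfold moll; fun_prop

theorem integrable_moll : Integrable (moll Φ n) := by
  rcases eq_or_ne n 0 with rfl | hn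
  · rw [show moll Φ 0 = 0 from funext fun x => by simp [moll]]
    exact integrable_zero _ _ _
  · exact (Φ.integrable.comp_mul_left' (Nat.cast_ne_zero.2 hn)).const_mul _

theorem hasDerivAt_moll (x : ℝ) :
    HasDerivAt (moll Φ n) (n * moll (SchwartzMap.derivCLM ℝ ℝ Φ) n x) x := by
  have := ((Φ.differentiableAt (x := n * x)).hasDerivAt.comp x
    ((hasDerivAt_id x).const_mul (n : ℝ))).const_mul (n : ℝ)
  exact this.congr_deriv (by rw [moll, SchwartzMap.derivCLM_apply]; ring)

theorem abs_moll_le {C : ℝ} (hC : ∀ x, |Φ x| ≤ C * (1 + x ^ 2)⁻¹) (x : ℝ) :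
    |moll Φ n x| ≤ n * C * (1 + x ^ 2)⁻¹ := by
  rcases Nat.eq_zero_or_pos n with rfl | hn
  · simp [moll]
  have hC0 : 0 ≤ C := by simpa using (abs_nonneg _).trans (hC 0)
  have hn1 : (1 : ℝ) ≤ n := Nat.one_le_cast.2 hn
  rw [moll, abs_mul, Nat.abs_cast, mul_assoc]
  gcongr
  refine (hC _).trans (mul_le_mul_of_nonneg_left (inv_anti₀ (by positivity) ?_) hC0)
  rw [mul_pow]
  nlinarith [mul_le_mul_of_nonneg_right (one_le_pow₀ hn1 : 1 ≤ (n : ℝ) ^ 2) (sq_nonneg x)]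

theorem convol_moll_eq_integral (u : ℝ → ℝ) {n : ℕ} (hn : n ≠ 0) (x : ℝ) :
    convol u (moll Φ n) x = ∫ z, u (x - z / n) * Φ z := by
  have hn' : (n : ℝ) ≠ 0 := Nat.cast_ne_zero.2 hn
  have h := Measure.integral_comp_mul_left (fun z => u (x - z / n) * Φ z) n
  simp only [mul_div_cancel_left₀ _ hn'] at h
  calc convol u (moll Φ n) x = n * ∫ y, u (x - y) * Φ (n * y) := by
        rw [convol, ← integral_const_mul]; congr 1; ext y; rw [moll]; ring
    _ = _ := by rw [h, smul_eq_mul, abs_inv, Nat.abs_cast, mul_inv_cancel_left₀ hn']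

end Mollifier

section Convolution

variable {u φ : ℝ → ℝ} {M : ℝ}

theorem convol_eq_convolution (u φ : ℝ → ℝ) :
    convol u φ = convolution u φ (ContinuousLinearMap.mul ℝ ℝ) volume :=
  funext fun _ => convolution_mul_swap.symm

theorem convol_apply_eq_integral (u φ : ℝ → ℝ) (x : ℝ) :
    convol u φ x = ∫ t, u t * φ (x - t) := by
  rw [convol_eq_convolution, convolution_def]; rfl

theorem continuous_convol (hu : Continuous u) (hub : ∀ x, |u x| ≤ M) (hφ : Integrable φ) :
    Continuous (convol u φ) := by
  rw [convol_eq_convolution]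
  exact BddAbove.continuous_convolution_left_of_integrable _
    ⟨M, by rintro _ ⟨x, rfl⟩; exact hub x⟩ hu hφ

theorem inv_one_add_sq_le_three_mul {a b : ℝ} (h : |a - b| ≤ 1) :
    (1 + a ^ 2)⁻¹ ≤ 3 * (1 + b ^ 2)⁻¹ := by
  rw [← div_eq_mul_inv, inv_eq_one_div, div_le_div_iff₀ (by positivity) (by positivity)]
  have : (a - b) ^ 2 ≤ 1 := by nlinarith [sq_abs (a - b), abs_nonneg (a - b)]
  nlinarith [sq_nonneg (2 * a - b)]

theorem hasDerivAt_convol {φ' : ℝ → ℝ} {C : ℝ} (hu : Continuous u) (hub : ∀ x, |u x| ≤ M)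
    (hφ : Integrable φ) (hφd : ∀ x, HasDerivAt φ (φ' x) x) (hφ'c : Continuous φ')
    (hφ' : ∀ x, |φ' x| ≤ C * (1 + x ^ 2)⁻¹) (x₀ : ℝ) :
    HasDerivAt (convol u φ) (convol u φ' x₀) x₀ := by
  have hφc : Continuous φ := continuous_iff_continuousAt.2 fun x => (hφd x).continuousAt
  have hM : 0 ≤ M := (abs_nonneg _).trans (hub 0)
  have hC : 0 ≤ C := by simpa using (abs_nonneg _).trans (hφ' 0)
  rw [funext (convol_apply_eq_integral u φ), convol_apply_eq_integral]
  refine (hasDerivAt_integral_of_dominated_loc_of_deriv_le (F := fun x t => u t * φ (x - t))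
    (F' := fun x t => u t * φ' (x - t)) (bound := fun t => M * (3 * C) * (1 + (x₀ - t) ^ 2)⁻¹)
    (Metric.ball_mem_nhds x₀ one_pos) ?_ ?_ ?_ ?_ ?_ ?_).2
  · exact .of_forall fun x =>
      (hu.mul (hφc.comp (continuous_const.sub continuous_id))).aestronglyMeasurable
  · exact (hφ.comp_sub_left x₀).bdd_mul hu.aestronglyMeasurable (.of_forall hub)
  · exact (hu.mul (hφ'c.comp (continuous_const.sub continuous_id))).aestronglyMeasurable
  · refine .of_forall fun t x hx => ?_
    have hx' : |(x - t) - (x₀ - t)| ≤ 1 := by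
      rw [sub_sub_sub_cancel_right, ← Real.dist_eq]; exact (Metric.mem_ball.1 hx).le
    rw [Real.norm_eq_abs, abs_mul]
    calc |u t| * |φ' (x - t)| ≤ M * (C * (1 + (x - t) ^ 2)⁻¹) :=
          mul_le_mul (hub t) (hφ' _) (abs_nonneg _) hM
      _ ≤ M * (C * (3 * (1 + (x₀ - t) ^ 2)⁻¹)) := by
          gcongr; exact inv_one_add_sq_le_three_mul hx'
      _ = M * (3 * C) * (1 + (x₀ - t) ^ 2)⁻¹ := by ring
  · exact (integrable_inv_one_add_sq.comp_sub_left x₀).const_mul _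
  · exact .of_forall fun t x _ => by
      simpa using ((hφd (x - t)).comp x ((hasDerivAt_id x).sub_const t)).const_mul (u t)

end Convolution

section ApproximateIdentity

variable (Φ : SchwartzMap ℝ ℝ)

theorem tendsto_setIntegral_le_abs {g : ℝ → ℝ} (hg : Integrable g) {δ : ℝ} (hδ : 0 < δ) :
    Tendsto (fun n : ℕ => ∫ z in {z | n * δ ≤ |z|}, g z) atTop (𝓝 0) := by
  have hempty : ⋂ n : ℕ, {z : ℝ | n * δ ≤ |z|} = ∅ := by
    refine eq_empty_of_forall_notMem fun z hz => ?_
    obtain ⟨N, hN⟩ := exists_nat_gt (|z| / δ)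
    rw [div_lt_iff₀ hδ] at hN
    exact (mem_iInter.1 hz N).not_gt hN
  have h := tendsto_setIntegral_of_antitone (μ := volume) (f := g)
    (fun n : ℕ => measurableSet_le measurable_const continuous_abs.measurable)
    (fun m n hmn z (hz : n * δ ≤ |z|) => (by gcongr : (m : ℝ) * δ ≤ n * δ).trans hz)
    ⟨0, hg.integrableOn⟩
  rwa [hempty, Measure.restrict_empty, integral_zero_measure] at h

theorem abs_convol_moll_sub_le (hΦ : IsMollifier Φ) {T u : ℝ → ℝ} (hT : Continuous T) {n : ℕ}
    (hn : n ≠ 0) {x ε δ : ℝ} (hδ : 0 < δ)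
    (hnear : ∀ z, |z| < n * δ → |T (x - z / n) - u x| ≤ ε) (hfar : ∀ y, |T y - u x| ≤ 2 * n) :
    |convol T (moll Φ n) x - u x| ≤
      ε * (∫ z, |Φ z|) + 2 / δ * ∫ z in {z | n * δ ≤ |z|}, |z| * |Φ z| := by
  set tail := {z : ℝ | n * δ ≤ |z|}
  have htail : MeasurableSet tail := measurableSet_le measurable_const continuous_abs.measurable
  have hmoment : Integrable fun z => |z| * |Φ z| := by
    simpa using SchwartzMap.integrable_pow_mul volume Φ 1
  have hbound : Integrable fun z => ε * |Φ z| + 2 / δ * tail.indicator (fun z => |z| * |Φ z|) z :=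
    (Φ.integrable.abs.const_mul ε).add ((hmoment.indicator htail).const_mul _)
  have hTint : Integrable fun z => T (x - z / n) * Φ z :=
    Φ.integrable.bdd_mul
      (hT.comp (continuous_const.sub (continuous_id.div_const _))).aestronglyMeasurable
      (c := 2 * n + |u x|) (.of_forall fun z => by
        rw [Real.norm_eq_abs]
        linarith [hfar (x - z / n), abs_sub_abs_le_abs_sub (T (x - z / n)) (u x)])
  have hpt (z : ℝ) : |(T (x - z / n) - u x) * Φ z| ≤
      ε * |Φ z| + 2 / δ * tail.indicator (fun z => |z| * |Φ z|) z := by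
    rw [abs_mul]
    by_cases hz : |z| < n * δ
    · rw [indicator_of_notMem (show z ∉ tail from not_le.2 hz), mul_zero, add_zero]
      exact mul_le_mul_of_nonneg_right (hnear z hz) (abs_nonneg _)
    · rw [indicator_of_mem (show z ∈ tail from not_lt.1 hz)]
      have hε : 0 ≤ ε := (abs_nonneg _).trans (hnear 0 (by
        simpa using mul_pos (Nat.cast_pos.2 (Nat.pos_of_ne_zero hn)) hδ))
      have hnz : 2 * (n : ℝ) ≤ 2 / δ * |z| := by
        rw [div_mul_eq_mul_div, le_div_iff₀ hδ]; linarith [not_lt.1 hz]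
      calc |T (x - z / n) - u x| * |Φ z| ≤ 2 / δ * (|z| * |Φ z|) := by
            rw [← mul_assoc]; exact mul_le_mul_of_nonneg_right ((hfar _).trans hnz) (abs_nonneg _)
        _ ≤ _ := le_add_of_nonneg_left (by positivity)
  calc |convol T (moll Φ n) x - u x| = |∫ z, (T (x - z / n) - u x) * Φ z| := by
        simp_rw [sub_mul]
        rw [convol_moll_eq_integral Φ T hn, integral_sub hTint (Φ.integrable.const_mul (u x)),
          integral_const_mul, show ∫ z, Φ z = 1 from hΦ, mul_one]
    _ ≤ ∫ z, (ε * |Φ z| + 2 / δ * tail.indicator (fun z => |z| * |Φ z|) z) := by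
        rw [← Real.norm_eq_abs]
        exact norm_integral_le_of_norm_le hbound (.of_forall hpt)
    _ = _ := by
        rw [integral_add (Φ.integrable.abs.const_mul ε) ((hmoment.indicator htail).const_mul _),
          integral_const_mul, integral_const_mul, integral_indicator htail]

theorem tendstoLocallyUniformly_convol_moll (hΦ : IsMollifier Φ) {u : ℝ → ℝ} (hu : Continuous u)
    {T : ℕ → ℝ → ℝ} (hT : ∀ n, Continuous (T n)) (hTn : ∀ n x, |T n x| ≤ n)
    (hTu : ∀ K, IsCompact K → ∀ᶠ n in atTop, EqOn (T n) u K) :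
    TendstoLocallyUniformly (fun n => convol (T n) (moll Φ n)) u atTop := by
  rw [tendstoLocallyUniformly_iff_forall_isCompact]
  intro K hK
  rw [Metric.tendstoUniformlyOn_iff]
  intro ε hε
  obtain ⟨M, hM⟩ := hK.exists_bound_of_continuousOn hu.continuousOn
  have hK₁ : IsCompact (Metric.cthickening 1 K) := hK.cthickening
  obtain ⟨ε', hε', hε'A⟩ : ∃ ε' > 0, ε' * (∫ z, |Φ z|) < ε / 2 := by
    have hA : 0 ≤ ∫ z, |Φ z| := integral_nonneg fun z => abs_nonneg _
    refine ⟨ε / (2 * ((∫ z, |Φ z|) + 1)), by positivity, ?_⟩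
    rw [div_mul_eq_mul_div, div_lt_div_iff₀ (by positivity) two_pos]; nlinarith
  obtain ⟨δ, hδ, hδu⟩ := Metric.uniformContinuousOn_iff.1
    (hK₁.uniformContinuousOn_of_continuous hu.continuousOn) ε' hε'
  obtain ⟨δ', hδ', hδ'δ, hδ'1⟩ : ∃ δ' > 0, δ' ≤ δ ∧ δ' ≤ 1 :=
    ⟨min δ 1, lt_min hδ one_pos, min_le_left _ _, min_le_right _ _⟩
  have hmoment : Integrable fun z => |z| * |Φ z| := by
    simpa using SchwartzMap.integrable_pow_mul volume Φ 1
  have htail := (((tendsto_setIntegral_le_abs hmoment hδ').const_mul (2 / δ')).eventually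
    (gt_mem_nhds (show 2 / δ' * 0 < ε / 2 by simpa using hε)))
  filter_upwards [eventually_ne_atTop 0, eventually_ge_atTop ⌈M⌉₊, hTu _ hK₁, htail]
    with n hn hnM hTK htailn x hx
  have hn' : (0 : ℝ) < n := Nat.cast_pos.2 (Nat.pos_of_ne_zero hn)
  rw [dist_comm, Real.dist_eq]
  refine (abs_convol_moll_sub_le Φ hΦ (hT n) hn hδ' (u := u) (ε := ε') (fun z hz => ?_)
    (fun y => ?_)).trans_lt (by linarith)
  · have hdist : dist (x - z / n) x < δ' := by
      rw [Real.dist_eq, sub_sub_cancel_left, abs_neg, abs_div, Nat.abs_cast, div_lt_iff₀ hn']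
      linarith
    have hmem : x - z / n ∈ Metric.cthickening 1 K :=
      Metric.mem_cthickening_of_dist_le _ x 1 K hx (hdist.le.trans hδ'1)
    rw [hTK hmem, ← Real.dist_eq]
    exact (hδu _ hmem x (Metric.self_subset_cthickening K hx) (hdist.trans_le hδ'δ)).le
  · have hux : |u x| ≤ M := hM x hx
    linarith [abs_sub (T n y) (u x), hTn n y, Nat.ceil_le.1 hnM]

end ApproximateIdentity

theorem contDiff_one_of_hasDerivAt {F G : ℝ → ℝ} (h : ∀ x, HasDerivAt F (G x) x)
    (hG : Continuous G) : ContDiff ℝ 1 F :=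
  contDiff_one_iff_deriv.2 ⟨fun x => (h x).differentiableAt, by rwa [funext fun x => (h x).deriv]⟩

theorem contDiff_two_of_hasDerivAt {F G : ℝ → ℝ} (h : ∀ x, HasDerivAt F (G x) x)
    (hG : ContDiff ℝ 1 G) : ContDiff ℝ 2 F := by
  rw [show (2 : WithTop ℕ∞) = 1 + 1 by norm_num, contDiff_succ_iff_deriv]
  exact ⟨fun x => (h x).differentiableAt, fun h => absurd h (by norm_num),
    by rwa [funext fun x => (h x).deriv]⟩

section Regularization

variable {σ b : ℝ → ℝ} (Φ : SchwartzMap ℝ ℝ) (n : ℕ)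

theorem abs_min_sq_le (σ : ℝ → ℝ) (n : ℕ) (x : ℝ) : |min (σ x ^ 2) (n : ℝ)| ≤ n :=
  abs_le.2 ⟨(neg_nonpos.2 n.cast_nonneg).trans (le_min (sq_nonneg _) n.cast_nonneg),
    min_le_right _ _⟩

theorem abs_max_neg_min_le (b : ℝ → ℝ) (n : ℕ) (x : ℝ) : |max (-(n : ℝ)) (min (b x) n)| ≤ n :=
  abs_le.2 ⟨le_max_left _ _, max_le (neg_le_self n.cast_nonneg) (min_le_right _ _)⟩

theorem continuous_sigmaSqReg (hσ : Continuous σ) : Continuous (sigmaSqReg σ Φ n) :=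
  continuous_convol ((hσ.pow 2).min continuous_const) (abs_min_sq_le σ n) (integrable_moll Φ n)

theorem hasDerivAt_bReg (hb : Continuous b) (x : ℝ) :
    HasDerivAt (bReg b Φ n) (convol (fun y => max (-(n : ℝ)) (min (b y) n))
      (fun y => n * moll (SchwartzMap.derivCLM ℝ ℝ Φ) n y) x) x := by
  obtain ⟨C, hC⟩ := (SchwartzMap.derivCLM ℝ ℝ Φ).exists_abs_le_mul_inv_one_add_sq
  refine hasDerivAt_convol (continuous_const.max (hb.min continuous_const)) (abs_max_neg_min_le b n)
    (integrable_moll Φ n) (hasDerivAt_moll Φ n) (continuous_const.mul (continuous_moll _ n))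
    (C := n * (n * C)) (fun y => ?_) x
  rw [abs_mul, Nat.abs_cast]
  exact (mul_le_mul_of_nonneg_left (abs_moll_le _ n hC y) n.cast_nonneg).trans_eq (by ring)

theorem continuous_deriv_bReg (hb : Continuous b) : Continuous (deriv (bReg b Φ n)) := by
  rw [funext fun x => (hasDerivAt_bReg Φ n hb x).deriv]
  exact continuous_convol (continuous_const.max (hb.min continuous_const)) (abs_max_neg_min_le b n)
    ((integrable_moll _ n).const_mul _)

theorem tendstoLocallyUniformly_sigmaSqReg (hσ : Continuous σ) (hΦ : IsMollifier Φ) :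
    TendstoLocallyUniformly (sigmaSqReg σ Φ) (fun x => σ x ^ 2) atTop := by
  refine tendstoLocallyUniformly_convol_moll Φ hΦ (hσ.pow 2)
    (fun n => (hσ.pow 2).min continuous_const) (abs_min_sq_le σ) fun K hK => ?_
  obtain ⟨M, hM⟩ := hK.exists_bound_of_continuousOn (hσ.pow 2).continuousOn
  filter_upwards [eventually_ge_atTop ⌈M⌉₊] with n hn x hx
  exact min_eq_left (((le_abs_self _).trans (hM x hx)).trans (Nat.ceil_le.1 hn))

/-- `σₙ²` may vanish when `Φ` takes negative values, and then `bₙ' / σₙ²` (with `x / 0 = 0`)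
is discontinuous; the floor `(n + 1)⁻¹` prevents this. -/
def sigmaSqRegPos (σ : ℝ → ℝ) (Φ : SchwartzMap ℝ ℝ) (n : ℕ) (x : ℝ) : ℝ :=
  max (sigmaSqReg σ Φ n x) ((n : ℝ) + 1)⁻¹

theorem sigmaSqRegPos_pos (x : ℝ) : 0 < sigmaSqRegPos σ Φ n x :=
  (by positivity : (0 : ℝ) < ((n : ℝ) + 1)⁻¹).trans_le (le_max_right _ _)

theorem continuous_sigmaSqRegPos (hσ : Continuous σ) : Continuous (sigmaSqRegPos σ Φ n) :=
  (continuous_sigmaSqReg Φ n hσ).max continuous_const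

theorem eventually_eqOn_sigmaSqRegPos (hσ : Continuous σ) (hσpos : ∀ x, 0 < σ x)
    (hΦ : IsMollifier Φ) {K : Set ℝ} (hK : IsCompact K) :
    ∀ᶠ n in atTop, EqOn (sigmaSqRegPos σ Φ n) (sigmaSqReg σ Φ n) K := by
  rcases K.eq_empty_or_nonempty with rfl | hne
  · exact .of_forall fun n => eqOn_empty _ _
  obtain ⟨z, -, hz⟩ := hK.exists_isMinOn hne (hσ.pow 2).continuousOn
  have hm : 0 < σ z ^ 2 / 2 := by have := hσpos z; positivity
  have hunif := Metric.tendstoUniformlyOn_iff.1 (tendstoLocallyUniformly_iff_forall_isCompact.1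
    (tendstoLocallyUniformly_sigmaSqReg Φ hσ hΦ) K hK) _ hm
  have hfloor := (tendsto_one_div_add_atTop_nhds_zero_nat (𝕜 := ℝ)).eventually (gt_mem_nhds hm)
  filter_upwards [hunif, hfloor] with n hclose hsmall x hx
  have h1 := hclose x hx
  have h2 : σ z ^ 2 ≤ σ x ^ 2 := hz hx
  rw [Real.dist_eq, abs_lt] at h1
  rw [one_div] at hsmall
  exact max_eq_left (by linarith)

theorem tendstoLocallyUniformly_sigmaSqRegPos (hσ : Continuous σ) (hσpos : ∀ x, 0 < σ x)
    (hΦ : IsMollifier Φ) :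
    TendstoLocallyUniformly (sigmaSqRegPos σ Φ) (fun x => σ x ^ 2) atTop :=
  (tendstoLocallyUniformly_sigmaSqReg Φ hσ hΦ).congr_of_eventually_eqOn fun _ hK =>
    (eventually_eqOn_sigmaSqRegPos Φ hσ hσpos hΦ hK).mono fun _ h => h.symm

def driftRatio (σ b : ℝ → ℝ) (Φ : SchwartzMap ℝ ℝ) (n : ℕ) (x : ℝ) : ℝ :=
  deriv (bReg b Φ n) x / sigmaSqRegPos σ Φ n x

theorem continuous_driftRatio (hσ : Continuous σ) (hb : Continuous b) :
    Continuous (driftRatio σ b Φ n) :=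
  (continuous_deriv_bReg Φ n hb).div (continuous_sigmaSqRegPos Φ n hσ)
    fun x => (sigmaSqRegPos_pos Φ n x).ne'

def SigmaApproxPos (σ b : ℝ → ℝ) (Φ : SchwartzMap ℝ ℝ) (n : ℕ) (x : ℝ) : ℝ :=
  2 * ∫ y in (0 : ℝ)..x, driftRatio σ b Φ n y

theorem hasDerivAt_SigmaApproxPos (hσ : Continuous σ) (hb : Continuous b) (x : ℝ) :
    HasDerivAt (SigmaApproxPos σ b Φ n) (2 * driftRatio σ b Φ n x) x :=
  ((continuous_driftRatio Φ n hσ hb).integral_hasStrictDerivAt 0 x).hasDerivAt.const_mul 2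

theorem contDiff_SigmaApproxPos (hσ : Continuous σ) (hb : Continuous b) :
    ContDiff ℝ 1 (SigmaApproxPos σ b Φ n) :=
  contDiff_one_of_hasDerivAt (hasDerivAt_SigmaApproxPos Φ n hσ hb)
    (continuous_const.mul (continuous_driftRatio Φ n hσ hb))

theorem tendstoLocallyUniformly_SigmaApproxPos {Sg : ℝ → ℝ} (hσ : Continuous σ)
    (hσpos : ∀ x, 0 < σ x) (hΦ : IsMollifier Φ) (hSg : SigmaExists σ b Sg) :
    TendstoLocallyUniformly (SigmaApproxPos σ b Φ) Sg atTop :=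
  (hSg.2 Φ hΦ).congr_of_eventually_eqOn fun K hK => by
    obtain ⟨L, hL, hKL⟩ := hK.exists_isCompact_uIcc_subset 0
    filter_upwards [eventually_eqOn_sigmaSqRegPos Φ hσ hσpos hΦ hL] with n hn x hx
    rw [SigmaApprox, SigmaApproxPos]
    congr 1
    refine intervalIntegral.integral_congr fun y hy => ?_
    simp only [driftRatio, hn (hKL x hx hy)]

theorem hasDerivAt_exp_SigmaApproxPos_mul_deriv (hσ : Continuous σ) (hb : Continuous b)
    {g : ℝ → ℝ} (hg : ContDiff ℝ 2 g) {x : ℝ} (hx : sigmaSqRegPos σ Φ n x = sigmaSqReg σ Φ n x) :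
    HasDerivAt (fun y => Real.exp (SigmaApproxPos σ b Φ n y) * deriv g y)
      (Real.exp (SigmaApproxPos σ b Φ n x) * (2 * Lreg σ b Φ n g x / sigmaSqRegPos σ Φ n x)) x := by
  refine ((hasDerivAt_SigmaApproxPos Φ n hσ hb x).exp.mul
    (hg.deriv'.differentiable one_ne_zero x).hasDerivAt).congr_deriv ?_
  have hpos := sigmaSqRegPos_pos (σ := σ) Φ n x
  rw [Lreg, driftRatio, ← hx]
  field_simp
  ring

end Regularization

section ApproxSolution

variable {σ b ψ : ℝ → ℝ} (Φ : SchwartzMap ℝ ℝ) (n : ℕ) (c : ℝ)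

def approxSolution (σ b : ℝ → ℝ) (Φ : SchwartzMap ℝ ℝ) (ψ : ℝ → ℝ) (c : ℝ) (n : ℕ) (x : ℝ) : ℝ :=
  c + ∫ t in (0 : ℝ)..x, Real.exp (-SigmaApproxPos σ b Φ n t) * ψ t

theorem hasDerivAt_exp_neg_SigmaApproxPos_mul (hσ : Continuous σ) (hb : Continuous b)
    (hψ : ContDiff ℝ 1 ψ) (x : ℝ) :
    HasDerivAt (fun y => Real.exp (-SigmaApproxPos σ b Φ n y) * ψ y)
      (Real.exp (-SigmaApproxPos σ b Φ n x) * (deriv ψ x - 2 * driftRatio σ b Φ n x * ψ x)) x :=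
  ((hasDerivAt_SigmaApproxPos Φ n hσ hb x).neg.exp.mul
    (hψ.differentiable one_ne_zero x).hasDerivAt).congr_deriv (by simp only [Pi.neg_apply]; ring)

theorem contDiff_exp_neg_SigmaApproxPos_mul (hσ : Continuous σ) (hb : Continuous b)
    (hψ : ContDiff ℝ 1 ψ) : ContDiff ℝ 1 fun y => Real.exp (-SigmaApproxPos σ b Φ n y) * ψ y :=
  (contDiff_SigmaApproxPos Φ n hσ hb).neg.exp.mul hψ

theorem hasDerivAt_approxSolution (hσ : Continuous σ) (hb : Continuous b)
    (hψ : ContDiff ℝ 1 ψ) (x : ℝ) :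
    HasDerivAt (approxSolution σ b Φ ψ c n) (Real.exp (-SigmaApproxPos σ b Φ n x) * ψ x) x :=
  ((contDiff_exp_neg_SigmaApproxPos_mul Φ n hσ hb hψ).continuous.integral_hasStrictDerivAt 0 x
    ).hasDerivAt.const_add c

theorem deriv_approxSolution (hσ : Continuous σ) (hb : Continuous b) (hψ : ContDiff ℝ 1 ψ) :
    deriv (approxSolution σ b Φ ψ c n) = fun x => Real.exp (-SigmaApproxPos σ b Φ n x) * ψ x :=
  funext fun x => (hasDerivAt_approxSolution Φ n c hσ hb hψ x).deriv

theorem contDiff_approxSolution (hσ : Continuous σ) (hb : Continuous b) (hψ : ContDiff ℝ 1 ψ) :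
    ContDiff ℝ 2 (approxSolution σ b Φ ψ c n) :=
  contDiff_two_of_hasDerivAt (hasDerivAt_approxSolution Φ n c hσ hb hψ)
    (contDiff_exp_neg_SigmaApproxPos_mul Φ n hσ hb hψ)

theorem Lreg_approxSolution (hσ : Continuous σ) (hb : Continuous b) (hψ : ContDiff ℝ 1 ψ) :
    Lreg σ b Φ n (approxSolution σ b Φ ψ c n) = fun x =>
      sigmaSqReg σ Φ n x / 2 * (Real.exp (-SigmaApproxPos σ b Φ n x) *
          (deriv ψ x - 2 * driftRatio σ b Φ n x * ψ x)) +
        deriv (bReg b Φ n) x * (Real.exp (-SigmaApproxPos σ b Φ n x) * ψ x) := by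
  ext x
  rw [Lreg, deriv_approxSolution Φ n c hσ hb hψ,
    (hasDerivAt_exp_neg_SigmaApproxPos_mul Φ n hσ hb hψ x).deriv]

theorem continuous_Lreg_approxSolution (hσ : Continuous σ) (hb : Continuous b)
    (hψ : ContDiff ℝ 1 ψ) : Continuous (Lreg σ b Φ n (approxSolution σ b Φ ψ c n)) := by
  have hE := (Real.continuous_exp.comp (contDiff_SigmaApproxPos Φ n hσ hb).continuous.neg)
  rw [Lreg_approxSolution Φ n c hσ hb hψ]
  exact (((continuous_sigmaSqReg Φ n hσ).div_const 2).mul (hE.mul ((hψ.continuous_deriv le_rfl).sub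
    ((continuous_const.mul (continuous_driftRatio Φ n hσ hb)).mul hψ.continuous)))).add
    ((continuous_deriv_bReg Φ n hb).mul (hE.mul hψ.continuous))

theorem Lreg_approxSolution_of_eq (hσ : Continuous σ) (hb : Continuous b) (hψ : ContDiff ℝ 1 ψ)
    {x : ℝ} (hx : sigmaSqRegPos σ Φ n x = sigmaSqReg σ Φ n x) :
    Lreg σ b Φ n (approxSolution σ b Φ ψ c n) x =
      Real.exp (-SigmaApproxPos σ b Φ n x) * (sigmaSqReg σ Φ n x / 2 * deriv ψ x) := by
  have hpos := sigmaSqRegPos_pos (σ := σ) Φ n x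
  rw [Lreg_approxSolution Φ n c hσ hb hψ]
  simp only [driftRatio, ← hx]
  field_simp
  ring

end ApproxSolution

section GeneralizedSolution

variable {σ b Sg f : ℝ → ℝ}

theorem IsC1GenSolution.exists_deriv_eq_exp_mul {ℓ : ℝ → ℝ} (hσ : Continuous σ)
    (hσpos : ∀ x, 0 < σ x) (hb : Continuous b) (hSg : SigmaExists σ b Sg)
    (hs : IsC1GenSolution σ b f ℓ) :
    ∃ ψ : ℝ → ℝ, ContDiff ℝ 1 ψ ∧ ∀ x, deriv f x = Real.exp (-Sg x) * ψ x := by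
  obtain ⟨Φ, hΦ⟩ := exists_isMollifier
  obtain ⟨hf, hℓ, hsol⟩ := hs
  obtain ⟨fn, hfn, -, -, hfn', hL⟩ := hsol Φ hΦ
  have hσ2 : Continuous fun x => σ x ^ 2 := hσ.pow 2
  have hσ2ne (x : ℝ) : σ x ^ 2 ≠ 0 := (pow_pos (hσpos x) 2).ne'
  have hEc : Continuous fun x => Real.exp (Sg x) := Real.continuous_exp.comp hSg.1
  have hρc : Continuous fun x => 2 * ℓ x / σ x ^ 2 := (continuous_const.mul hℓ).div hσ2 hσ2ne
  have hE : TendstoLocallyUniformly (fun n x => Real.exp (SigmaApproxPos σ b Φ n x))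
      (fun x => Real.exp (Sg x)) atTop :=
    Real.continuous_exp.comp_tendstoLocallyUniformly
      (tendstoLocallyUniformly_SigmaApproxPos Φ hσ hσpos hΦ hSg) hSg.1
  have hR := hE.fun_mul₀ (((continuous_const_mul 2).comp_tendstoLocallyUniformly hL hℓ).fun_div₀
    (tendstoLocallyUniformly_sigmaSqRegPos Φ hσ hσpos hΦ) (continuous_const.mul hℓ) hσ2 hσ2ne)
    hEc hρc
  have hψ (x : ℝ) : HasDerivAt (fun x => Real.exp (Sg x) * deriv f x)
      (Real.exp (Sg x) * (2 * ℓ x / σ x ^ 2)) x := by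
    refine hasDerivAt_of_tendstoLocallyUniformlyOn Metric.isOpen_ball hR.tendstoLocallyUniformlyOn
      ?_ (fun y _ => (hE.fun_mul₀ hfn' hEc (hf.continuous_deriv le_rfl)).tendsto_comp
        (by fun_prop) tendsto_const_nhds) (Metric.mem_ball_self one_pos)
    filter_upwards [eventually_eqOn_sigmaSqRegPos Φ hσ hσpos hΦ (isCompact_closedBall x 1)]
      with n hn y hy
    exact hasDerivAt_exp_SigmaApproxPos_mul_deriv Φ n hσ hb (hfn n)
      (hn (Metric.ball_subset_closedBall hy))
  refine ⟨_, contDiff_one_of_hasDerivAt hψ (hEc.mul hρc), fun x => ?_⟩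
  rw [← mul_assoc, ← Real.exp_add, neg_add_cancel, Real.exp_zero, one_mul]

theorem isC1GenSolution_of_deriv_eq_exp_mul {ψ : ℝ → ℝ} (hσ : Continuous σ)
    (hσpos : ∀ x, 0 < σ x) (hb : Continuous b) (hSg : SigmaExists σ b Sg)
    (hf : ContDiff ℝ 1 f) (hψ : ContDiff ℝ 1 ψ) (hf' : ∀ x, deriv f x = Real.exp (-Sg x) * ψ x) :
    IsC1GenSolution σ b f fun x => Real.exp (-Sg x) * (σ x ^ 2 / 2 * deriv ψ x) := by
  have hσ2 : Continuous fun x => σ x ^ 2 := hσ.pow 2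
  have hf'c : Continuous (deriv f) := hf.continuous_deriv le_rfl
  have hψ'c : Continuous (deriv ψ) := hψ.continuous_deriv le_rfl
  have hEc : Continuous fun x => Real.exp (-Sg x) := Real.continuous_exp.comp hSg.1.neg
  refine ⟨hf, hEc.mul ((hσ2.div_const 2).mul hψ'c), fun Φ hΦ => ?_⟩
  have hE : TendstoLocallyUniformly (fun n x => Real.exp (-SigmaApproxPos σ b Φ n x))
      (fun x => Real.exp (-Sg x)) atTop :=
    (Real.continuous_exp.comp continuous_neg).comp_tendstoLocallyUniformly
      (tendstoLocallyUniformly_SigmaApproxPos Φ hσ hσpos hΦ hSg) hSg.1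
  have hg : TendstoLocallyUniformly (fun n x => Real.exp (-SigmaApproxPos σ b Φ n x) * ψ x)
      (deriv f) atTop :=
    (hE.fun_mul₀ (tendstoLocallyUniformly_const ψ atTop) hEc hψ.continuous).congr_right
      fun x => (hf' x).symm
  refine ⟨approxSolution σ b Φ ψ (f 0), fun n => contDiff_approxSolution Φ n _ hσ hb hψ,
    fun n => continuous_Lreg_approxSolution Φ n _ hσ hb hψ, ?_, ?_, ?_⟩
  · refine ((continuous_const_add (f 0)).comp_tendstoLocallyUniformly
      (hg.intervalIntegral (fun n => (contDiff_exp_neg_SigmaApproxPos_mul Φ n hσ hb hψ).continuous)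
        hf'c 0)
      (intervalIntegral.continuous_primitive (fun _ _ => hf'c.intervalIntegrable _ _) 0)
      ).congr_right fun x => ?_
    rw [intervalIntegral.integral_deriv_eq_sub (fun y _ => hf.differentiable one_ne_zero y)
      (hf'c.intervalIntegrable _ _), add_sub_cancel]
  · simpa only [deriv_approxSolution Φ _ _ hσ hb hψ] using hg
  · refine (hE.fun_mul₀ (((continuous_id'.div_const 2).comp_tendstoLocallyUniformly
      (tendstoLocallyUniformly_sigmaSqReg Φ hσ hΦ) hσ2).fun_mul₀
        (tendstoLocallyUniformly_const (deriv ψ) atTop) (hσ2.div_const 2) hψ'c) hEc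
      ((hσ2.div_const 2).mul hψ'c)).congr_of_eventually_eqOn fun K hK => ?_
    filter_upwards [eventually_eqOn_sigmaSqRegPos Φ hσ hσpos hΦ hK] with n hn x hx
    exact (Lreg_approxSolution_of_eq Φ n _ hσ hb hψ (hn hx)).symm

end GeneralizedSolution

theorem statement6_general (σ b Sg : ℝ → ℝ) (hσc : Continuous σ) (hσpos : ∀ x, 0 < σ x)
    (hbc : Continuous b) (hSg : SigmaExists σ b Sg) (f : ℝ → ℝ) :
    (∃ ℓ : ℝ → ℝ, IsC1GenSolution σ b f ℓ) ↔
      (ContDiff ℝ 1 f ∧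
        ∃ ψ : ℝ → ℝ, ContDiff ℝ 1 ψ ∧ ∀ x, deriv f x = Real.exp (-Sg x) * ψ x) := by
  constructor
  · rintro ⟨ℓ, hs⟩
    exact ⟨hs.1, hs.exists_deriv_eq_exp_mul hσc hσpos hbc hSg⟩
  · rintro ⟨hf, ψ, hψ, hf'⟩
    exact ⟨_, isC1GenSolution_of_deriv_eq_exp_mul hσc hσpos hbc hSg hf hψ hf'⟩

/-- Lemma 2.12: `𝒟_L` is exactly the set of `f ∈ C¹(ℝ)` such that
`f' = e^{−Σ} ψ` for some `ψ ∈ C¹(ℝ)`. -/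
theorem statement6 (σ b Sg : ℝ → ℝ) (hσc : Continuous σ) (hσpos : ∀ x, 0 < σ x)
    (hbc : Continuous b) (hb0 : b 0 = 0) (hSg : SigmaExists σ b Sg) (f : ℝ → ℝ) :
    (∃ ℓ : ℝ → ℝ, IsC1GenSolution σ b f ℓ) ↔
      (ContDiff ℝ 1 f ∧
        ∃ ψ : ℝ → ℝ, ContDiff ℝ 1 ψ ∧ ∀ x, deriv f x = Real.exp (-Sg x) * ψ x) :=
  statement6_general σ b Sg hσc hσpos hbc hSg f

end
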